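/- arXiv:2104.01186 — 3 statements merged into one kernel-verified Lean document; each statement's English description precedes it below -/
import Mathlib

section
/- For every Motzkin meander with catastrophes P of length n, ψ(P) is a Dyck path of semilength n+1, i.e., ψ increases semilength by exactly one while producing a valid Dyck path. -/
/-- Every prefix of the path has nonnegative sum (the path stays weakly above the x-axis). -/
def NonnegPrefixes (w : List ℤ) : Prop := ∀ p ∈ w.inits, 0 ≤ p.sum

/-- A Dyck word: steps U = 1 and D = -1, nonnegative prefixes, ending at height 0. -/
def IsDyckWord (w : List ℤ) : Prop :=
  (∀ s ∈ w, s = 1 ∨ s = -1) ∧ NonnegPrefixes w ∧ w.sum = 0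

/-- A Motzkin path: steps U = 1, F = 0, D = -1, nonnegative prefixes, ending at height 0. -/
def IsMotzkinWord (w : List ℤ) : Prop :=
  (∀ s ∈ w, s = 1 ∨ s = 0 ∨ s = -1) ∧ NonnegPrefixes w ∧ w.sum = 0

/-- A Dyck meander with catastrophes: steps U = 1, D = -1, D_i = -i (i ≥ 2),
nonnegative, and every catastrophe step D_i (i ≥ 2) lands exactly at height 0. -/
def IsDyckMeanderCat (w : List ℤ) : Prop :=
  (∀ s ∈ w, s = 1 ∨ s ≤ -1) ∧ NonnegPrefixes w ∧
    ∀ i, i < w.length → w.getD i 0 ≤ -2 → (w.take (i+1)).sum = 0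

/-- A Motzkin meander with catastrophes: steps U = 1, F = 0, D = -1, D_i = -i (i ≥ 2),
nonnegative, every catastrophe landing exactly at height 0. -/
def IsMotzkinMeanderCat (w : List ℤ) : Prop :=
  (∀ s ∈ w, s ≤ 1) ∧ NonnegPrefixes w ∧
    ∀ i, i < w.length → w.getD i 0 ≤ -2 → (w.take (i+1)).sum = 0

def IsDyckExcursionCat (w : List ℤ) : Prop := IsDyckMeanderCat w ∧ w.sum = 0

def IsMotzkinExcursionCat (w : List ℤ) : Prop := IsMotzkinMeanderCat w ∧ w.sum = 0

/-- The factor `pat` occurs in `w` starting at position `i`. -/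
def OccursAt (pat w : List ℤ) (i : ℕ) : Prop := pat <+: w.drop i

/-- `w` has no occurrence of the factor `pat`. -/
def Avoids (pat w : List ℤ) : Prop := ∀ i, ¬ OccursAt pat w i

/-- `w` has no occurrence of `pat` starting at height h > 0. -/
def AvoidsAtPosHeight (pat w : List ℤ) : Prop :=
  ∀ i, OccursAt pat w i → (w.take i).sum ≤ 0

/-- `w` has no occurrence of `pat` starting at height h ≥ 2. -/
def AvoidsAtHeightGe2 (pat w : List ℤ) : Prop :=
  ∀ i, OccursAt pat w i → (w.take i).sum < 2

def pUUU : List ℤ := [1, 1, 1]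
def pDUD : List ℤ := [-1, 1, -1]
def pUUD : List ℤ := [1, 1, -1]
def pUD : List ℤ := [1, -1]
def pDU : List ℤ := [-1, 1]

/-- χ is the classical bijection sending Motzkin paths of length m to
Dyck paths of semilength m avoiding the factor UUU. -/
def ChiSpec (χ : List ℤ → List ℤ) : Prop :=
  ∀ m : ℕ, Set.BijOn χ {w | IsMotzkinWord w ∧ w.length = m}
    {w | IsDyckWord w ∧ w.length = 2 * m ∧ Avoids pUUU w}

/-- The recursive equations defining the paper's map ψ from Motzkin meanders with
catastrophes to Dyck paths: ψ(ε) = UD; ψ(Fα) = UD ψ(α);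
ψ(Uα₁Uα₂⋯Uα_k) = U (Uχ(α₁)D)(Uχ(α₂)D)⋯(Uχ(α_k)D) D;
ψ(Uα₁⋯Uα_k D_k β) = U (Uχ(α₁)D)⋯(Uχ(α_k)D) D ψ(β), with D₁ := D. -/
def PsiSpec (χ ψ : List ℤ → List ℤ) : Prop :=
  (ψ [] = [1, -1]) ∧
  (∀ α : List ℤ, IsMotzkinMeanderCat α → ψ (0 :: α) = 1 :: -1 :: ψ α) ∧
  (∀ L : List (List ℤ), L ≠ [] → (∀ a ∈ L, IsMotzkinWord a) →
      ψ ((L.map (fun a => 1 :: a)).flatten) =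
        1 :: ((L.map (fun a => 1 :: (χ a ++ [-1]))).flatten ++ [-1])) ∧
  (∀ (L : List (List ℤ)) (β : List ℤ), L ≠ [] → (∀ a ∈ L, IsMotzkinWord a) →
      IsMotzkinMeanderCat β →
      ψ ((L.map (fun a => 1 :: a)).flatten ++ (-(L.length : ℤ)) :: β) =
        1 :: ((L.map (fun a => 1 :: (χ a ++ [-1]))).flatten ++ -1 :: ψ β))

/-! Induction on the length. A nonempty meander starts with a flat step or with an up step. In
the latter case, let `Q` be the part before the first return to the axis (the whole path if
there is none). `Q` stays strictly positive, so it has no catastrophes, and cutting it just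
after the last visit to each level `1, …, k` writes it as `Uα₁⋯Uα_k` with Motzkin `α_j`; the
first return step then drops from height `k`, so it is `D_k`. Each `Uχ(α_j)D` is a Dyck path
of length `2|α_j| + 2`, so every clause of `ψ` adds exactly one `UD` to the semilength. -/

lemma nonnegPrefixes_iff (w : List ℤ) : NonnegPrefixes w ↔ ∀ i, 0 ≤ (w.take i).sum := by
  constructor
  · exact fun h i => h _ ((List.mem_inits _ _).2 (List.take_prefix i w))
  · intro h p hp
    rw [List.prefix_iff_eq_take.1 ((List.mem_inits _ _).1 hp)]
    exact h _

namespace IsDyckWord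

lemma nil : IsDyckWord [] :=
  ⟨by simp, by simp [nonnegPrefixes_iff], rfl⟩

lemma append {u v : List ℤ} (hu : IsDyckWord u) (hv : IsDyckWord v) : IsDyckWord (u ++ v) := by
  obtain ⟨hu₁, hu₂, hu₃⟩ := hu
  obtain ⟨hv₁, hv₂, hv₃⟩ := hv
  rw [nonnegPrefixes_iff] at hu₂ hv₂
  refine ⟨?_, ?_, by simp [hu₃, hv₃]⟩
  · simpa [or_imp, forall_and] using ⟨hu₁, hv₁⟩
  · rw [nonnegPrefixes_iff]
    intro i
    rw [List.take_append, List.sum_append]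
    exact add_nonneg (hu₂ i) (hv₂ _)

lemma wrap {w : List ℤ} (hw : IsDyckWord w) : IsDyckWord (1 :: (w ++ [-1])) := by
  obtain ⟨h₁, h₂, h₃⟩ := hw
  rw [nonnegPrefixes_iff] at h₂
  refine ⟨fun s hs => ?_, ?_, by simp [h₃]⟩
  · simp only [List.mem_cons, List.mem_append, List.not_mem_nil, or_false] at hs
    rcases hs with rfl | hs | rfl
    exacts [.inl rfl, h₁ s hs, .inr rfl]
  rw [nonnegPrefixes_iff]
  rintro (_ | i)
  · simp
  · have hlast : -1 ≤ (([-1] : List ℤ).take (i - w.length)).sum := by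
      cases i - w.length <;> simp
    rw [List.take_succ_cons, List.sum_cons, List.take_append, List.sum_append]
    linarith [h₂ i]

end IsDyckWord

lemma ChiSpec.isDyckWord_length {χ : List ℤ → List ℤ} (hχ : ChiSpec χ) {a : List ℤ}
    (ha : IsMotzkinWord a) : IsDyckWord (χ a) ∧ (χ a).length = 2 * a.length := by
  obtain ⟨hd, hlen, -⟩ := (hχ a.length).mapsTo
    (show a ∈ {w | IsMotzkinWord w ∧ w.length = a.length} from ⟨ha, rfl⟩)
  exact ⟨hd, hlen⟩

lemma isDyckWord_flatten_map_wrap {χ : List ℤ → List ℤ}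
    (hχ : ∀ a, IsMotzkinWord a → IsDyckWord (χ a) ∧ (χ a).length = 2 * a.length)
    (L : List (List ℤ)) (hL : ∀ a ∈ L, IsMotzkinWord a) :
    IsDyckWord (L.map fun a => 1 :: (χ a ++ [-1])).flatten ∧
      (L.map fun a => 1 :: (χ a ++ [-1])).flatten.length =
        2 * (L.map fun a => (1 : ℤ) :: a).flatten.length := by
  induction L with
  | nil => exact ⟨IsDyckWord.nil, rfl⟩
  | cons a L ih =>
    obtain ⟨hd, hlen⟩ := ih fun b hb => hL b (List.mem_cons_of_mem _ hb)
    obtain ⟨hχd, hχlen⟩ := hχ a (hL a List.mem_cons_self)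
    refine ⟨hχd.wrap.append hd, ?_⟩
    simp [hχlen, hlen]
    ring

lemma exists_flatten_up_motzkin (Q : List ℤ) (hsteps : ∀ s ∈ Q, s = 1 ∨ s = 0 ∨ s = -1)
    (hpos : ∀ i, 0 < i → i ≤ Q.length → 0 < (Q.take i).sum) :
    ∃ L : List (List ℤ), (∀ a ∈ L, IsMotzkinWord a) ∧ (L.length : ℤ) = Q.sum ∧
      Q = (L.map fun a => 1 :: a).flatten := by
  induction hQ : Q.length using Nat.strong_induction_on generalizing Q with
  | _ n ih =>
  rcases Q with _ | ⟨s, R⟩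
  · exact ⟨[], by simp, by simp, rfl⟩
  have hs : s = 1 := by
    have := hpos 1 one_pos (by simp)
    have := hsteps s (by simp)
    simp_all only [List.take_succ_cons, List.take_zero, List.sum_cons, List.sum_nil]
    omega
  subst hs
  have hR : ∀ i, i ≤ R.length → 0 ≤ (R.take i).sum := fun i hi => by
    simpa [Int.lt_iff_add_one_le] using hpos (i + 1) (by omega) (by simpa using hi)
  set j := Nat.findGreatest (fun j => (R.take j).sum = 0) R.length
  have hj : (R.take j).sum = 0 := Nat.findGreatest_spec (P := fun j => (R.take j).sum = 0)
    (Nat.zero_le _) (by simp)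
  have hjle : j ≤ R.length := Nat.findGreatest_le _
  have hsplit : ∀ i, (R.take (j + i)).sum = ((R.drop j).take i).sum := fun i => by
    rw [List.take_add, List.sum_append, hj, zero_add]
  have hα : IsMotzkinWord (R.take j) := by
    refine ⟨fun x hx => hsteps x (List.mem_cons_of_mem _ (List.take_subset j R hx)), ?_, hj⟩
    rw [nonnegPrefixes_iff]
    intro i
    rw [List.take_take]
    exact hR _ ((min_le_right _ _).trans hjle)
  obtain ⟨L, hL, hlen, hdrop⟩ := ih (R.drop j).length (by simp at hQ ⊢; omega) (R.drop j)
    (fun x hx => hsteps x (List.mem_cons_of_mem _ (List.drop_subset j R hx)))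
    (fun i hi hi' => by
      have hle : j + i ≤ R.length := by simp at hi'; omega
      rw [← hsplit]
      exact lt_of_le_of_ne (hR _ hle) (Ne.symm (Nat.findGreatest_is_greatest
        (P := fun j => (R.take j).sum = 0) (by omega) hle)))
    rfl
  refine ⟨R.take j :: L, ?_, ?_, ?_⟩
  · simpa [forall_eq_or_imp] using ⟨hα, hL⟩
  · rw [List.sum_cons, ← List.take_append_drop j R, List.sum_append, hj, ← hlen]
    simp [add_comm]
  · rw [List.map_cons, List.flatten_cons, ← hdrop]
    simp

namespace IsMotzkinMeanderCat

lemma drop_of_sum_take_eq_zero {P : List ℤ} (hP : IsMotzkinMeanderCat P) (j : ℕ)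
    (hj : (P.take j).sum = 0) : IsMotzkinMeanderCat (P.drop j) := by
  obtain ⟨hle, hnn, hcat⟩ := hP
  rw [nonnegPrefixes_iff] at hnn
  have hsplit : ∀ i, (P.take (j + i)).sum = ((P.drop j).take i).sum := fun i => by
    rw [List.take_add, List.sum_append, hj, zero_add]
  refine ⟨fun x hx => hle x (List.drop_subset j P hx), ?_, ?_⟩
  · rw [nonnegPrefixes_iff]
    exact fun i => hsplit i ▸ hnn _
  · intro i hi hstep
    rw [List.length_drop] at hi
    rw [List.getD_eq_getElem _ _ (by simpa using hi), List.getElem_drop,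
      ← List.getD_eq_getElem _ 0] at hstep
    rw [← hsplit, ← add_assoc]
    exact hcat (j + i) (by omega) hstep

lemma exists_flatten_up_motzkin_take {P : List ℤ} (hP : IsMotzkinMeanderCat P) (n : ℕ)
    (hn : ∀ m, 0 < m → m ≤ n → (P.take m).sum ≠ 0) :
    ∃ L : List (List ℤ), (∀ a ∈ L, IsMotzkinWord a) ∧ (L.length : ℤ) = (P.take n).sum ∧
      P.take n = (L.map fun a => 1 :: a).flatten := by
  obtain ⟨hle, hnn, hcat⟩ := hP
  rw [nonnegPrefixes_iff] at hnn
  apply exists_flatten_up_motzkin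
  · intro x hx
    obtain ⟨t, ht, rfl⟩ := List.mem_iff_getElem.1 hx
    rw [List.length_take] at ht
    have htP : t < P.length := by omega
    have hge : -1 ≤ P[t] := by
      by_contra hlt
      refine hn (t + 1) (by omega) (by omega) (hcat t htP ?_)
      rw [List.getD_eq_getElem _ _ htP]
      omega
    have := hle P[t] (List.getElem_mem _)
    rw [List.getElem_take]
    omega
  · intro m hm hmn
    rw [List.length_take] at hmn
    rw [List.take_take, min_eq_left (by omega)]
    exact lt_of_le_of_ne (hnn m) (hn m hm (by omega)).symm

lemma decompose {P : List ℤ} (hP : IsMotzkinMeanderCat P) :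
    P = [] ∨ (∃ α, IsMotzkinMeanderCat α ∧ P = 0 :: α) ∨
      ∃ L : List (List ℤ), L ≠ [] ∧ (∀ a ∈ L, IsMotzkinWord a) ∧
        (P = (L.map fun a => 1 :: a).flatten ∨ ∃ β, IsMotzkinMeanderCat β ∧
          P = (L.map fun a => 1 :: a).flatten ++ (-(L.length : ℤ)) :: β) := by
  rcases P with _ | ⟨s, α⟩
  · exact .inl rfl
  rcases eq_or_ne s 0 with rfl | hs₀
  · exact .inr (.inl ⟨α, by simpa using hP.drop_of_sum_take_eq_zero 1 (by simp), rfl⟩)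
  have hs : s = 1 := by
    have := (nonnegPrefixes_iff _).1 hP.2.1 1
    have := hP.1 s (by simp)
    simp only [List.take_succ_cons, List.take_zero, List.sum_cons, List.sum_nil] at *
    omega
  subst hs
  refine .inr (.inr ?_)
  by_cases hret : ∃ j, 0 < j ∧ j ≤ (1 :: α).length ∧ ((1 :: α).take j).sum = 0
  · classical
    obtain ⟨j, ⟨hj0, hjle, hj⟩, hmin⟩ : ∃ j, (0 < j ∧ j ≤ (1 :: α).length ∧
        ((1 :: α).take j).sum = 0) ∧ ∀ m < j, ¬(0 < m ∧ m ≤ (1 :: α).length ∧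
          ((1 :: α).take m).sum = 0) :=
      ⟨Nat.find hret, Nat.find_spec hret, fun m => Nat.find_min hret⟩
    obtain ⟨i, rfl⟩ : ∃ i, j = i + 1 := ⟨j - 1, by omega⟩
    have hi : i ≠ 0 := by
      rintro rfl
      simp at hj
    obtain ⟨L, hL, hlen, htake⟩ := hP.exists_flatten_up_motzkin_take i
      fun m hm hmi hsum => hmin m (by omega) ⟨hm, by omega, hsum⟩
    have hstep := List.sum_take_succ (1 :: α) i (by omega)
    have hsplit := (List.take_append_drop i (1 :: α)).symm
    rw [List.drop_eq_getElem_cons (by omega)] at hsplit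
    refine ⟨L, ?_, hL, .inr ⟨_, hP.drop_of_sum_take_eq_zero _ hj, hsplit.trans ?_⟩⟩
    · rintro rfl
      simp [List.take_eq_nil_iff] at htake
      omega
    · rw [← htake, hlen]
      congr 2
      omega
  · push Not at hret
    obtain ⟨L, hL, hlen, htake⟩ := hP.exists_flatten_up_motzkin_take (1 :: α).length hret
    rw [List.take_length] at htake
    refine ⟨L, ?_, hL, .inl htake⟩
    rintro rfl
    simp at htake

end IsMotzkinMeanderCat

theorem psi_isDyckWord_length {χ ψ : List ℤ → List ℤ}
    (hχ : ∀ a, IsMotzkinWord a → IsDyckWord (χ a) ∧ (χ a).length = 2 * a.length)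
    (hψ : PsiSpec χ ψ) (P : List ℤ) (hP : IsMotzkinMeanderCat P) :
    IsDyckWord (ψ P) ∧ (ψ P).length = 2 * (P.length + 1) := by
  obtain ⟨hnil, hflat, hup, hcat⟩ := hψ
  induction hn : P.length using Nat.strong_induction_on generalizing P with
  | _ n ih =>
  subst hn
  rcases hP.decompose with rfl | ⟨α, hα, rfl⟩ | ⟨L, hL0, hL, rfl | ⟨β, hβ, rfl⟩⟩
  · rw [hnil]
    exact ⟨IsDyckWord.nil.wrap, rfl⟩
  · obtain ⟨hd, hlen⟩ := ih _ (by simp) α hα rfl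
    rw [hflat α hα]
    exact ⟨IsDyckWord.nil.wrap.append hd, by simp [hlen]; ring⟩
  · obtain ⟨hd, hlen⟩ := isDyckWord_flatten_map_wrap hχ L hL
    rw [hup L hL0 hL]
    exact ⟨hd.wrap, by simp [hlen]; ring⟩
  · obtain ⟨hd, hlen⟩ := isDyckWord_flatten_map_wrap hχ L hL
    obtain ⟨hβd, hβlen⟩ := ih _ (by simp; omega) β hβ rfl
    rw [hcat L β hL0 hL hβ]
    exact ⟨by simpa using hd.wrap.append hβd, by simp [hlen, hβlen]; ring⟩

/-- For every Motzkin meander with catastrophes P of length n, ψ(P) is a Dyck path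
of semilength n+1. -/
theorem stmt_14 (χ ψ : List ℤ → List ℤ) (hχ : ChiSpec χ) (hψ : PsiSpec χ ψ)
    (n : ℕ) (P : List ℤ) (hP : IsMotzkinMeanderCat P) (hn : P.length = n) :
    IsDyckWord (ψ P) ∧ (ψ P).length = 2 * (n + 1) := by
  subst hn
  exact psi_isDyckWord_length (fun _ => hχ.isDyckWord_length) hψ P hP
end

section
/- Every nonempty Motzkin meander with catastrophes P admits a unique decomposition into exactly one of the forms: P = Fα with α a Motzkin meander with catastrophes; P = Uα₁Uα₂⋯Uα_k where k≥1 and each α_j is a Motzkin path (so P never returns to the x-axis after its first step); or P = Uα₁Uα₂⋯Uα_k D_k β where k≥1, each α_j is a Motzkin path, D_1:=D, and β is a Motzkin meander with catastrophes. -/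
/-!
Cut `P` at its first return to the x-axis. Before that return the path stays at height `≥ 1`,
so cutting it after its last visit to each height `0, 1, …` writes it as `U α₁ ⋯ U αₖ` with
Motzkin paths `αⱼ`. It then sits at height `k`, so the returning step is `D_k` (an `F` step when
`k = 0`), after which `P` starts afresh as a meander with catastrophes. For uniqueness, every
nonempty prefix of `U α₁ ⋯ U αₖ` has positive height: this locates the first return in each of
the three forms and recovers the `αⱼ` from `U α₁ ⋯ U αₖ`.
-/

theorem nonnegPrefixes_iff_forall_prefix {w : List ℤ} :
    NonnegPrefixes w ↔ ∀ p, p <+: w → 0 ≤ p.sum := by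
  simp only [NonnegPrefixes, List.mem_inits]

theorem nonnegPrefixes_iff_forall_take {w : List ℤ} :
    NonnegPrefixes w ↔ ∀ n, 0 ≤ (w.take n).sum := by
  rw [nonnegPrefixes_iff_forall_prefix]
  exact ⟨fun h n => h _ (w.take_prefix n),
    fun h p hp => List.prefix_iff_eq_take.1 hp ▸ h p.length⟩

theorem List.IsPrefix.prefix_or_eq_append {α : Type*} {p a b : List α} (h : p <+: a ++ b) :
    p <+: a ∨ ∃ q, q <+: b ∧ p = a ++ q := by
  obtain ⟨t, ht⟩ := h
  rcases List.append_eq_append_iff.1 ht with ⟨s, rfl, -⟩ | ⟨q, rfl, rfl⟩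
  · exact Or.inl (List.prefix_append p s)
  · exact Or.inr ⟨q, List.prefix_append q t, rfl⟩

theorem NonnegPrefixes.append {a b : List ℤ} (ha : NonnegPrefixes a) (hb : NonnegPrefixes b) :
    NonnegPrefixes (a ++ b) := by
  rw [nonnegPrefixes_iff_forall_prefix] at *
  intro p hp
  rcases hp.prefix_or_eq_append with hp | ⟨q, hq, rfl⟩
  · exact ha p hp
  · rw [List.sum_append]
    exact add_nonneg (ha a List.prefix_rfl) (hb q hq)

theorem one_le_sum_of_prefix_one_cons {w p : List ℤ} (hw : NonnegPrefixes w)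
    (hp : p <+: 1 :: w) (hne : p ≠ []) : 1 ≤ p.sum := by
  obtain rfl | ⟨q, rfl, hq⟩ := List.prefix_cons_iff.1 hp
  · exact absurd rfl hne
  · simpa using nonnegPrefixes_iff_forall_prefix.1 hw q hq

theorem NonnegPrefixes.one_cons {w : List ℤ} (hw : NonnegPrefixes w) :
    NonnegPrefixes (1 :: w) := by
  rw [nonnegPrefixes_iff_forall_prefix]
  intro p hp
  rcases eq_or_ne p [] with rfl | hne
  · simp
  · exact zero_le_one.trans (one_le_sum_of_prefix_one_cons hw hp hne)

/-- The path `U α₁ U α₂ ⋯ U αₖ`. -/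
def upJoin (L : List (List ℤ)) : List ℤ := (L.map (fun a => 1 :: a)).flatten

@[simp] theorem upJoin_nil : upJoin [] = [] := rfl

@[simp] theorem upJoin_cons (a : List ℤ) (L : List (List ℤ)) :
    upJoin (a :: L) = 1 :: (a ++ upJoin L) := rfl

section upJoin

variable {L L₁ L₂ : List (List ℤ)}

theorem sum_upJoin (hL : ∀ a ∈ L, IsMotzkinWord a) : (upJoin L).sum = L.length := by
  induction L with
  | nil => simp
  | cons a L ih =>
    simp only [List.forall_mem_cons] at hL
    simp [hL.1.2.2, ih hL.2, add_comm]

theorem nonnegPrefixes_upJoin (hL : ∀ a ∈ L, IsMotzkinWord a) : NonnegPrefixes (upJoin L) := by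
  induction L with
  | nil => simp [NonnegPrefixes]
  | cons a L ih =>
    simp only [List.forall_mem_cons] at hL
    exact (hL.1.2.1.append (ih hL.2)).one_cons

theorem eq_nil_of_prefix_upJoin {p : List ℤ} (hL : ∀ a ∈ L, IsMotzkinWord a)
    (hp : p <+: upJoin L) (h0 : p.sum = 0) : p = [] := by
  by_contra hne
  cases L with
  | nil => exact hne (List.prefix_nil.1 hp)
  | cons a L =>
    simp only [List.forall_mem_cons] at hL
    have := one_le_sum_of_prefix_one_cons (hL.1.2.1.append (nonnegPrefixes_upJoin hL.2))
      hp hne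
    omega

theorem eq_of_append_upJoin_eq {a b : List ℤ} (ha : a.sum = 0) (hb : b.sum = 0)
    (hL₁ : ∀ x ∈ L₁, IsMotzkinWord x) (hL₂ : ∀ x ∈ L₂, IsMotzkinWord x)
    (h : a ++ upJoin L₁ = b ++ upJoin L₂) : a = b ∧ upJoin L₁ = upJoin L₂ := by
  rcases List.append_eq_append_iff.1 h with ⟨s, rfl, hs⟩ | ⟨s, rfl, hs⟩
  · have : s = [] := eq_nil_of_prefix_upJoin hL₁ (hs ▸ List.prefix_append s _)
      (by simpa [ha] using hb)
    simp_all
  · have : s = [] := eq_nil_of_prefix_upJoin hL₂ (hs ▸ List.prefix_append s _)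
      (by simpa [hb] using ha)
    simp_all

theorem upJoin_inj (hL₁ : ∀ a ∈ L₁, IsMotzkinWord a) (hL₂ : ∀ a ∈ L₂, IsMotzkinWord a)
    (h : upJoin L₁ = upJoin L₂) : L₁ = L₂ := by
  induction L₁ generalizing L₂ with
  | nil => cases L₂ <;> simp_all
  | cons a L₁ ih =>
    cases L₂ with
    | nil => simp at h
    | cons b L₂ =>
      simp only [List.forall_mem_cons] at hL₁ hL₂
      simp only [upJoin_cons, List.cons.injEq, true_and] at h
      obtain ⟨rfl, htail⟩ := eq_of_append_upJoin_eq hL₁.1.2.2 hL₂.1.2.2 hL₁.2 hL₂.2 h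
      rw [ih hL₁.2 hL₂.2 htail]

theorem length_upJoin_lt_of_prefix {p s : List ℤ} (hL : ∀ a ∈ L, IsMotzkinWord a)
    (hp : p <+: upJoin L ++ s) (hne : p ≠ []) (h0 : p.sum = 0) :
    (upJoin L).length < p.length := by
  by_contra! hle
  exact hne (eq_nil_of_prefix_upJoin hL ((List.isPrefix_append_of_length hle).1 hp) h0)

theorem sum_upJoin_append_singleton (hL : ∀ a ∈ L, IsMotzkinWord a) :
    (upJoin L ++ [-(L.length : ℤ)]).sum = 0 := by
  simp [sum_upJoin hL]

theorem upJoin_append_singleton_prefix (L : List (List ℤ)) (x : ℤ) (β : List ℤ) :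
    upJoin L ++ [x] <+: upJoin L ++ x :: β :=
  (List.prefix_append_right_inj _).2 (by simp)

theorem upJoin_append_cons_inj {β₁ β₂ : List ℤ} (hL₁ : ∀ a ∈ L₁, IsMotzkinWord a)
    (hL₂ : ∀ a ∈ L₂, IsMotzkinWord a)
    (h : upJoin L₁ ++ (-(L₁.length : ℤ)) :: β₁ = upJoin L₂ ++ (-(L₂.length : ℤ)) :: β₂) :
    L₁ = L₂ ∧ β₁ = β₂ := by
  have h₁ := length_upJoin_lt_of_prefix hL₂ (h ▸ upJoin_append_singleton_prefix L₁ _ β₁)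
    (by simp) (sum_upJoin_append_singleton hL₁)
  have h₂ := length_upJoin_lt_of_prefix hL₁ (h.symm ▸ upJoin_append_singleton_prefix L₂ _ β₂)
    (by simp) (sum_upJoin_append_singleton hL₂)
  simp only [List.length_append, List.length_singleton] at h₁ h₂
  obtain ⟨hJ, hβ⟩ := List.append_inj h (by omega)
  exact ⟨upJoin_inj hL₁ hL₂ hJ, (List.cons.inj hβ).2⟩

theorem upJoin_append_cons_ne_upJoin {L' : List (List ℤ)} (β : List ℤ)
    (hL : ∀ a ∈ L, IsMotzkinWord a) (hL' : ∀ a ∈ L', IsMotzkinWord a) :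
    upJoin L ++ (-(L.length : ℤ)) :: β ≠ upJoin L' := fun h => by
  simpa using eq_nil_of_prefix_upJoin hL' (h ▸ upJoin_append_singleton_prefix _ _ _)
    (sum_upJoin_append_singleton hL)

end upJoin

theorem exists_eq_motzkinWord_append_upJoin {w : List ℤ} (hs : ∀ s ∈ w, s = 1 ∨ s = 0 ∨ s = -1)
    (hw : NonnegPrefixes w) :
    ∃ a L, IsMotzkinWord a ∧ (∀ b ∈ L, IsMotzkinWord b) ∧ w = a ++ upJoin L := by
  classical
  induction hlen : w.length using Nat.strong_induction_on generalizing w with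
  | _ N ih =>
  subst hlen
  rw [nonnegPrefixes_iff_forall_take] at hw
  -- `k` is the last visit of the path to the x-axis.
  set k := Nat.findGreatest (fun n => (w.take n).sum = 0) w.length
  have hk0 : (w.take k).sum = 0 :=
    Nat.findGreatest_spec (P := fun n => (w.take n).sum = 0) (Nat.zero_le _) (by simp)
  have hkw : k ≤ w.length := Nat.findGreatest_le _
  have hpos : ∀ n, k < n → n ≤ w.length → 1 ≤ (w.take n).sum := fun n hkn hn => by
    have := hw n
    have := Nat.findGreatest_is_greatest hkn hn
    omega
  have ha : IsMotzkinWord (w.take k) :=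
    ⟨fun s h => hs s (List.mem_of_mem_take h),
      nonnegPrefixes_iff_forall_take.2 fun n => by rw [List.take_take]; exact hw _, hk0⟩
  have hsplit := (List.take_append_drop k w).symm
  rcases hR : w.drop k with _ | ⟨s, R⟩
  · exact ⟨w.take k, [], ha, by simp, by simpa [hR] using hsplit⟩
  have hshift : ∀ m, ((s :: R).take m).sum = (w.take (k + m)).sum := fun m => by
    rw [List.take_add, List.sum_append, hk0, zero_add, hR]
  have hlenR : k + (R.length + 1) = w.length := by
    have := congrArg List.length hR
    simp only [List.length_drop, List.length_cons] at this
    omega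
  have hsR : ∀ t ∈ s :: R, t = 1 ∨ t = 0 ∨ t = -1 :=
    fun t ht => hs t (List.mem_of_mem_drop (hR ▸ ht))
  have hs1 : s = 1 := by
    have h1 := hpos (k + 1) (by omega) (by omega)
    rw [← hshift] at h1
    simp only [List.take_succ_cons, List.take_zero, List.sum_singleton] at h1
    rcases hsR s List.mem_cons_self with h | h | h <;> omega
  subst hs1
  have hRnn : NonnegPrefixes R := nonnegPrefixes_iff_forall_take.2 fun m => by
    have := hpos (k + (min m R.length + 1)) (by omega) (by omega)
    rw [← hshift, List.take_succ_cons, List.sum_cons, ← List.take_eq_take_min] at this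
    omega
  obtain ⟨a, L, ha', hL, rfl⟩ :=
    ih R.length (by omega) (fun t ht => hsR t (List.mem_cons_of_mem _ ht)) hRnn rfl
  refine ⟨w.take k, a :: L, ha, List.forall_mem_cons.2 ⟨ha', hL⟩, ?_⟩
  rw [upJoin_cons, ← hR]
  exact hsplit

theorem exists_eq_upJoin {w : List ℤ} (hs : ∀ s ∈ w, s = 1 ∨ s = 0 ∨ s = -1)
    (hw : ∀ p, p <+: w → p ≠ [] → 1 ≤ p.sum) :
    ∃ L, (∀ a ∈ L, IsMotzkinWord a) ∧ w = upJoin L := by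
  rcases w with _ | ⟨s, w⟩
  · exact ⟨[], by simp, rfl⟩
  have hs1 : s = 1 := by
    have h1 : 1 ≤ s := by simpa using hw [s] (by simp) (by simp)
    rcases hs s List.mem_cons_self with h | h | h <;> omega
  subst hs1
  have hnn : NonnegPrefixes w := nonnegPrefixes_iff_forall_prefix.2 fun p hp => by
    simpa using hw (1 :: p) (List.cons_prefix_cons.2 ⟨rfl, hp⟩) (by simp)
  obtain ⟨a, L, ha, hL, rfl⟩ :=
    exists_eq_motzkinWord_append_upJoin (fun t ht => hs t (List.mem_cons_of_mem _ ht)) hnn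
  exact ⟨a :: L, List.forall_mem_cons.2 ⟨ha, hL⟩, rfl⟩

namespace IsMotzkinMeanderCat

variable {w : List ℤ}

theorem drop {n : ℕ} (hw : IsMotzkinMeanderCat w) (h0 : (w.take n).sum = 0) :
    IsMotzkinMeanderCat (w.drop n) := by
  obtain ⟨hs, hnn, hcat⟩ := hw
  have hshift : ∀ m, ((w.drop n).take m).sum = (w.take (n + m)).sum := fun m => by
    rw [List.take_add, List.sum_append, h0, zero_add]
  refine ⟨fun s h => hs s (List.mem_of_mem_drop h), ?_, ?_⟩
  · rw [nonnegPrefixes_iff_forall_take] at hnn ⊢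
    exact fun m => hshift m ▸ hnn _
  · intro i hi hgd
    rw [List.length_drop] at hi
    rw [List.getD_eq_getElem _ _ (by simpa using hi), List.getElem_drop] at hgd
    rw [hshift, ← add_assoc]
    exact hcat (n + i) (by omega) (by rwa [List.getD_eq_getElem])

theorem exists_take_eq_upJoin {m : ℕ} (hw : IsMotzkinMeanderCat w)
    (hm : ∀ n, 0 < n → n ≤ m → (w.take n).sum ≠ 0) :
    ∃ L, (∀ a ∈ L, IsMotzkinWord a) ∧ w.take m = upJoin L := by
  obtain ⟨hs, hnn, hcat⟩ := hw
  rw [nonnegPrefixes_iff_forall_take] at hnn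
  apply exists_eq_upJoin
  · intro s h
    obtain ⟨i, hi, rfl⟩ := List.mem_iff_getElem.1 h
    rw [List.length_take] at hi
    rw [List.getElem_take]
    have := hs _ (List.getElem_mem (by omega : i < w.length))
    -- a catastrophe would be a return to the x-axis before `m`
    have : ¬ w[i] ≤ -2 := fun h2 =>
      hm (i + 1) (by omega) (by omega) (hcat i (by omega) (by rwa [List.getD_eq_getElem]))
    omega
  · intro p hp hne
    obtain ⟨hp, hlen⟩ := List.prefix_take_iff.1 hp
    rw [List.prefix_iff_eq_take.1 hp]
    have := hnn p.length
    have := hm p.length (List.length_pos_iff.2 hne) hlen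
    omega

end IsMotzkinMeanderCat

def Decomposes (P : List ℤ) : (List ℤ) ⊕ (List (List ℤ)) ⊕ (List (List ℤ) × List ℤ) → Prop
  | .inl α => IsMotzkinMeanderCat α ∧ P = 0 :: α
  | .inr (.inl L) => L ≠ [] ∧ (∀ a ∈ L, IsMotzkinWord a) ∧ P = upJoin L
  | .inr (.inr Lβ) => Lβ.1 ≠ [] ∧ (∀ a ∈ Lβ.1, IsMotzkinWord a) ∧ IsMotzkinMeanderCat Lβ.2 ∧
      P = upJoin Lβ.1 ++ (-(Lβ.1.length : ℤ)) :: Lβ.2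

theorem exists_decomposes {P : List ℤ} (hP : IsMotzkinMeanderCat P) (hne : P ≠ []) :
    ∃ d, Decomposes P d := by
  classical
  by_cases hret : ∃ n, 0 < n ∧ n ≤ P.length ∧ (P.take n).sum = 0
  · obtain ⟨hn0, hnP, hsum⟩ := Nat.find_spec hret
    set n := Nat.find hret
    obtain ⟨L, hL, hQ⟩ := hP.exists_take_eq_upJoin (m := n - 1) fun k hk hkn h0 =>
      Nat.find_min hret (by omega) ⟨hk, by omega, h0⟩
    have hstep : (P.take (n - 1)).sum + P[n - 1] = 0 := by
      rw [← List.sum_take_succ, Nat.sub_add_cancel hn0]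
      exact hsum
    rw [hQ, sum_upJoin hL] at hstep
    have hsplit : P = upJoin L ++ (-(L.length : ℤ)) :: P.drop n := by
      conv_lhs => rw [← List.take_append_drop (n - 1) P, List.drop_eq_getElem_cons (by omega),
        Nat.sub_add_cancel hn0]
      rw [hQ, show P[n - 1] = -(L.length : ℤ) by omega]
    rcases eq_or_ne L [] with rfl | hLne
    · exact ⟨.inl _, hP.drop hsum, by simpa using hsplit⟩
    · exact ⟨.inr (.inr (L, _)), hLne, hL, hP.drop hsum, hsplit⟩
  · push Not at hret
    obtain ⟨L, hL, hQ⟩ := hP.exists_take_eq_upJoin (m := P.length) hret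
    rw [List.take_length] at hQ
    exact ⟨.inr (.inl L), by rintro rfl; exact hne hQ, hL, hQ⟩

theorem Decomposes.unique {P : List ℤ} {d d'} (hd : Decomposes P d) (hd' : Decomposes P d') :
    d = d' := by
  -- `0 :: α` is `upJoin [] ++ (-0) :: α`, so the first form is the case `k = 0` of the third.
  rcases d with α | L | ⟨L, β⟩ <;> rcases d' with α' | L' | ⟨L', β'⟩ <;>
    simp only [Decomposes] at hd hd'
  · obtain ⟨-, rfl⟩ := hd
    simpa using hd'.2
  · obtain ⟨-, rfl⟩ := hd
    exact absurd hd'.2.2 (upJoin_append_cons_ne_upJoin (L := []) α (by simp) hd'.2.1)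
  · obtain ⟨-, rfl⟩ := hd
    exact absurd (upJoin_append_cons_inj (L₁ := []) (by simp) hd'.2.1 hd'.2.2.2).1.symm hd'.1
  · obtain ⟨-, rfl⟩ := hd'
    exact absurd hd.2.2 (upJoin_append_cons_ne_upJoin (L := []) α' (by simp) hd.2.1)
  · rw [upJoin_inj hd.2.1 hd'.2.1 (hd.2.2.symm.trans hd'.2.2)]
  · exact absurd (hd'.2.2.2.symm.trans hd.2.2) (upJoin_append_cons_ne_upJoin β' hd'.2.1 hd.2.1)
  · obtain ⟨-, rfl⟩ := hd'
    exact absurd (upJoin_append_cons_inj (L₂ := []) hd.2.1 (by simp) hd.2.2.2.symm).1 hd.1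
  · exact absurd (hd.2.2.2.symm.trans hd'.2.2) (upJoin_append_cons_ne_upJoin β hd.2.1 hd'.2.1)
  · obtain ⟨rfl, rfl⟩ := upJoin_append_cons_inj hd.2.1 hd'.2.1 (hd.2.2.2.symm.trans hd'.2.2.2)
    rfl

/-- Every nonempty Motzkin meander with catastrophes P decomposes uniquely into
exactly one of the forms: P = Fα (α a Motzkin meander with catastrophes);
P = Uα₁Uα₂⋯Uα_k with k ≥ 1 and each α_j a Motzkin path; or
P = Uα₁⋯Uα_k D_k β with k ≥ 1, each α_j a Motzkin path, D₁ := D, and β a Motzkin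
meander with catastrophes. -/
theorem stmt_16 (P : List ℤ) (hP : IsMotzkinMeanderCat P) (hne : P ≠ []) :
    ∃! d : (List ℤ) ⊕ (List (List ℤ)) ⊕ (List (List ℤ) × List ℤ),
      match d with
      | .inl α => IsMotzkinMeanderCat α ∧ P = 0 :: α
      | .inr (.inl L) => L ≠ [] ∧ (∀ a ∈ L, IsMotzkinWord a) ∧
          P = (L.map (fun a => 1 :: a)).flatten
      | .inr (.inr (L, β)) => L ≠ [] ∧ (∀ a ∈ L, IsMotzkinWord a) ∧
          IsMotzkinMeanderCat β ∧
          P = (L.map (fun a => 1 :: a)).flatten ++ (-(L.length : ℤ)) :: β := by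
  obtain ⟨d, hd⟩ := exists_decomposes hP hne
  -- the statement's `match` and `Decomposes` agree only once `d` is split into constructors
  refine ⟨d, ?_, fun d' hd' => Decomposes.unique ?_ hd⟩
  · rcases d with _ | _ | _ <;> exact hd
  · rcases d' with _ | _ | _ <;> exact hd'
end

section
/- For every Dyck excursion with catastrophes P of length n, the Dyck path φ(P) has the property that every occurrence of the factor UD starting at height 0 is followed, at a strictly later position, by an occurrence of the factor UUU. -/
/-- The recursive equations defining the paper's map φ from Dyck meanders with
catastrophes to Dyck paths:
φ(ε) = ε; φ(Uα) = UD φ(α); φ(UαDβ) = UUD φ(α) D φ(β);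
φ(UαD₂β) = U φ(αD) D φ(β); φ(UαD_iβ) = UD φ(αD_{i-1}) φ(β) for i ≥ 3. -/
def PhiSpec (φ : List ℤ → List ℤ) : Prop :=
  (φ [] = []) ∧
  (∀ α : List ℤ, (∀ s ∈ α, s = 1 ∨ s = -1) → NonnegPrefixes α →
      φ (1 :: α) = 1 :: -1 :: φ α) ∧
  (∀ α β : List ℤ, (∀ s ∈ α, s = 1 ∨ s = -1) → NonnegPrefixes α → α.sum = 0 →
      IsDyckMeanderCat β →
      φ (1 :: (α ++ -1 :: β)) = 1 :: 1 :: -1 :: (φ α ++ -1 :: φ β)) ∧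
  (∀ α β : List ℤ, (∀ s ∈ α, s = 1 ∨ s = -1) → NonnegPrefixes α → α.sum = 1 →
      IsDyckMeanderCat β →
      φ (1 :: (α ++ -2 :: β)) = 1 :: (φ (α ++ [-1]) ++ -1 :: φ β)) ∧
  (∀ (α β : List ℤ) (i : ℕ), 3 ≤ i → (∀ s ∈ α, s = 1 ∨ s = -1) → NonnegPrefixes α →
      α.sum = (i : ℤ) - 1 → IsDyckMeanderCat β →
      φ (1 :: (α ++ (-(i : ℤ)) :: β)) = 1 :: -1 :: (φ (α ++ [-((i : ℤ) - 1)]) ++ φ β))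

/-!
Split an excursion at its first return to height 0, `P = U α D_i β` (with `D₁ = D`). In each
case of the recursion `φ P = x ++ φ β` with `x` a Dyck path; as `x` ends with a down step, a
hill of `φ P` (a factor `UD` at height 0) lies inside `x` or inside `φ β`. For `i = 1, 2`,
`x = U w D` with `w` starting with `U`, so `x` has no hill. For `i ≥ 3`, `x = UD φ(α D_{i-1})`:
its only new hill is the leading `UD`, and `α D_{i-1}` contains a catastrophe, which `φ` always
turns into a `UUU` (for `D₂` because `φ` of a nonempty Dyck path starts with `UU`).
-/

theorem nonnegPrefixes_iff_sum_take {w : List ℤ} :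
    NonnegPrefixes w ↔ ∀ k, 0 ≤ (w.take k).sum := by
  refine ⟨fun h k => h _ ((List.mem_inits _ _).mpr (List.take_prefix k w)), fun h p hp => ?_⟩
  rw [List.prefix_iff_eq_take.mp ((List.mem_inits _ _).mp hp)]
  exact h _

theorem NonnegPrefixes.append_s18 {x y : List ℤ} (hx : NonnegPrefixes x) (hy : NonnegPrefixes y) :
    NonnegPrefixes (x ++ y) := by
  rw [nonnegPrefixes_iff_sum_take] at *
  intro k
  rw [List.take_append, List.sum_append]
  exact add_nonneg (hx k) (hy _)

theorem NonnegPrefixes.cons {a : ℤ} {w : List ℤ} (ha : 0 ≤ a) (hw : NonnegPrefixes w) :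
    NonnegPrefixes (a :: w) :=
  NonnegPrefixes.append_s18 (x := [a]) (by simpa [NonnegPrefixes] using ha) hw

theorem NonnegPrefixes.concat {x : List ℤ} {a : ℤ} (hx : NonnegPrefixes x)
    (ha : 0 ≤ x.sum + a) : NonnegPrefixes (x ++ [a]) := by
  intro p hp
  rw [List.inits_append, List.mem_append] at hp
  rcases hp with hp | hp
  · exact hx p hp
  · obtain rfl : p = x ++ [a] := by simpa using hp
    simpa using ha

theorem IsDyckWord.append_s18 {x y : List ℤ} (hx : IsDyckWord x) (hy : IsDyckWord y) :
    IsDyckWord (x ++ y) := by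
  refine ⟨?_, hx.2.1.append_s18 hy.2.1, by simp [hx.2.2, hy.2.2]⟩
  simpa [or_imp, forall_and] using And.intro hx.1 hy.1

theorem isDyckWord_nil : IsDyckWord [] := by
  simp [IsDyckWord, NonnegPrefixes]

theorem isDyckWord_up_down : IsDyckWord [1, -1] := by
  simp [IsDyckWord, NonnegPrefixes]

theorem IsDyckWord.elevate {w : List ℤ} (hw : IsDyckWord w) : IsDyckWord (1 :: w ++ [-1]) := by
  refine ⟨?_, (hw.2.1.cons zero_le_one).concat (by simp [hw.2.2]), by simp [hw.2.2]⟩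
  simpa [or_imp, forall_and] using hw.1

theorem IsDyckWord.isDyckExcursionCat {w : List ℤ} (hw : IsDyckWord w) :
    IsDyckExcursionCat w := by
  refine ⟨⟨fun s hs => (hw.1 s hs).imp_right le_of_eq, hw.2.1, fun i hi hle => ?_⟩, hw.2.2⟩
  rw [List.getD_eq_getElem _ _ hi] at hle
  rcases hw.1 _ (List.getElem_mem hi) with h | h <;> omega

theorem List.sum_take_add {M : Type*} [AddMonoid M] (l : List M) (m n : ℕ) :
    (l.take (m + n)).sum = (l.take m).sum + ((l.drop m).take n).sum := by
  rw [List.take_add, List.sum_append]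

theorem IsDyckExcursionCat.drop {P : List ℤ} (hP : IsDyckExcursionCat P) {k : ℕ}
    (hk : (P.take k).sum = 0) : IsDyckExcursionCat (P.drop k) := by
  obtain ⟨⟨hsteps, hnn, hcat⟩, hsum⟩ := hP
  rw [nonnegPrefixes_iff_sum_take] at hnn
  refine ⟨⟨fun s hs => hsteps s (List.mem_of_mem_drop hs), ?_, fun j hj hle => ?_⟩, ?_⟩
  · rw [nonnegPrefixes_iff_sum_take]
    intro j
    simpa [List.sum_take_add, hk] using hnn (k + j)
  · rw [List.length_drop] at hj
    have hcat' := hcat (k + j) (by omega) (by simpa [List.getD_eq_getElem?_getD] using hle)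
    simpa [add_assoc, List.sum_take_add, hk] using hcat'
  · have := congrArg List.sum (List.take_append_drop k P)
    rw [List.sum_append, hk, hsum] at this
    omega

theorem isDyckExcursionCat_append_singleton {α : List ℤ} {a : ℤ}
    (hsteps : ∀ s ∈ α, s = 1 ∨ s = -1) (hnn : NonnegPrefixes α) (ha : a ≤ -1)
    (hsum : α.sum + a = 0) : IsDyckExcursionCat (α ++ [a]) := by
  refine ⟨⟨?_, hnn.concat hsum.ge, fun i hi hle => ?_⟩, by simpa using hsum⟩
  · simpa [or_imp, forall_and] using ⟨fun s hs => (hsteps s hs).imp_right le_of_eq, Or.inr ha⟩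
  · rcases Nat.lt_or_ge i α.length with hi' | hi'
    · rw [List.getD_append _ _ _ _ hi', List.getD_eq_getElem _ _ hi'] at hle
      rcases hsteps _ (List.getElem_mem hi') with h | h <;> omega
    · rw [List.take_of_length_le (by simp; omega)]
      simpa using hsum

theorem IsDyckExcursionCat.exists_firstReturn {P : List ℤ} (hP : IsDyckExcursionCat P)
    (hne : P ≠ []) :
    ∃ α c β, P = 1 :: (α ++ c :: β) ∧ c ≤ -1 ∧ (∀ s ∈ α, s = 1 ∨ s = -1) ∧
      NonnegPrefixes α ∧ α.sum + c = -1 ∧ IsDyckExcursionCat β := by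
  obtain ⟨p, rest, rfl⟩ := List.exists_cons_of_ne_nil hne
  have hheight : ∀ k, 0 ≤ p + (rest.take k).sum := fun k => by
    simpa using nonnegPrefixes_iff_sum_take.mp hP.1.2.1 (k + 1)
  obtain rfl : p = 1 := by
    have := hheight 0
    rcases hP.1.1 p (by simp) with h | h <;> simp at this <;> omega
  have hex : ∃ m, m < rest.length ∧ (rest.take (m + 1)).sum = -1 := by
    have hrest : rest.sum = -1 := by have := hP.2; simp at this; omega
    have hlen : 0 < rest.length := List.length_pos_iff.mpr (by rintro rfl; simp at hrest)
    exact ⟨rest.length - 1, by omega, by rw [Nat.sub_add_cancel hlen, List.take_length, hrest]⟩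
  obtain ⟨hm, hmsum⟩ := Nat.find_spec hex
  set m := Nat.find hex
  have hmin : ∀ j < m, (rest.take (j + 1)).sum ≠ -1 := fun j hj h =>
    Nat.find_min hex hj ⟨by omega, h⟩
  have hbefore : ∀ k ≤ m, 0 ≤ (rest.take k).sum := by
    rintro (_ | j) hj
    · simp
    · have := hheight (j + 1)
      have := hmin j hj
      omega
  have hc : (rest.take m).sum + rest[m] = -1 := by rw [← List.sum_take_succ _ _ hm, hmsum]
  refine ⟨rest.take m, rest[m], rest.drop (m + 1), ?_, ?_, ?_, ?_, hc, ?_⟩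
  · rw [← List.drop_eq_getElem_cons hm, List.take_append_drop]
  · have := hbefore m le_rfl
    omega
  · intro s hs
    obtain ⟨j, hj, rfl⟩ := List.getElem_of_mem hs
    rw [List.length_take] at hj
    rw [List.getElem_take]
    refine (hP.1.1 _ (List.mem_cons_of_mem _ (List.getElem_mem _))).imp_right fun h => ?_
    by_contra hlt
    have hland := hP.1.2.2 (j + 1) (by simp; omega)
      (by rw [List.getD_cons_succ, List.getD_eq_getElem _ _ (by omega)]; omega)
    exact hmin j (by omega) (by simp at hland; omega)
  · rw [nonnegPrefixes_iff_sum_take]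
    intro k
    rw [List.take_take]
    exact hbefore _ (min_le_right _ _)
  · simpa using hP.drop (k := m + 2) (by simp [hmsum])

theorem occursAt_iff_getElem? {p w : List ℤ} {i : ℕ} :
    OccursAt p w i ↔ ∀ k (hk : k < p.length), w[i + k]? = some p[k] := by
  simp [OccursAt, List.prefix_iff_getElem?]

theorem occursAt_append_length_add {p x y : List ℤ} {j : ℕ} :
    OccursAt p (x ++ y) (x.length + j) ↔ OccursAt p y j := by
  rw [OccursAt, List.drop_length_add_append, OccursAt]

theorem OccursAt.append_right {p x : List ℤ} {i : ℕ} (h : OccursAt p x i) (y : List ℤ) :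
    OccursAt p (x ++ y) i :=
  h.trans (by simp [List.drop_append])

theorem OccursAt.of_append {p x y : List ℤ} {i : ℕ} (h : OccursAt p (x ++ y) i)
    (hi : i + p.length ≤ x.length) : OccursAt p x i := by
  rw [occursAt_iff_getElem?] at h ⊢
  intro k hk
  rw [← List.getElem?_append_left (l₂ := y) (by omega)]
  exact h k hk

theorem occursAt_pUD_iff {w : List ℤ} {i : ℕ} :
    OccursAt pUD w i ↔ w[i]? = some 1 ∧ w[i + 1]? = some (-1) := by
  rw [occursAt_iff_getElem?]
  refine ⟨fun h => ⟨h 0 (by simp [pUD]), h 1 (by simp [pUD])⟩, fun ⟨h0, h1⟩ k hk => ?_⟩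
  simp only [pUD, List.length_cons, List.length_nil] at hk
  interval_cases k <;> assumption

def HillsFollowedByUUU (w : List ℤ) : Prop :=
  ∀ i, OccursAt pUD w i → (w.take i).sum = 0 → ∃ j, i < j ∧ OccursAt pUUU w j

theorem hillsFollowedByUUU_nil : HillsFollowedByUUU [] := fun i h _ => by
  simp [occursAt_pUD_iff] at h

theorem HillsFollowedByUUU.append_s18 {x y : List ℤ} (hx0 : x.sum = 0) (hx : HillsFollowedByUUU x)
    (hy : HillsFollowedByUUU y) : HillsFollowedByUUU (x ++ y) := by
  intro i hocc hzero
  rcases lt_or_ge i x.length with hi | hi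
  · rw [List.take_append_of_le_length hi.le] at hzero
    by_cases hi2 : i + 2 ≤ x.length
    · obtain ⟨j, hij, hj⟩ := hx i (hocc.of_append hi2) hzero
      exact ⟨j, hij, hj.append_right y⟩
    · -- the hill would straddle `x` and `y`, forcing `x` to end at height 1
      exfalso
      have hxi : x[i] = 1 := by
        have := (occursAt_pUD_iff.mp hocc).1
        rwa [List.getElem?_append_left hi, List.getElem?_eq_getElem hi, Option.some_inj] at this
      have := List.sum_take_succ x i hi
      rw [List.take_of_length_le (by omega), hx0, hzero, hxi] at this
      omega
  · obtain ⟨k, rfl⟩ := Nat.exists_eq_add_of_le hi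
    rw [occursAt_append_length_add] at hocc
    obtain ⟨j, hkj, hj⟩ := hy k hocc (by simpa [List.take_length_add_append, hx0] using hzero)
    exact ⟨x.length + j, by omega, occursAt_append_length_add.mpr hj⟩

theorem hillsFollowedByUUU_up_up {t : List ℤ} (ht : NonnegPrefixes (1 :: t)) :
    HillsFollowedByUUU (1 :: 1 :: t ++ [-1]) := by
  rintro (_ | i) hocc hzero <;> exfalso
  · simp [occursAt_pUD_iff] at hocc
  · have hi : i ≤ t.length := by
      have := (occursAt_pUD_iff.mp hocc).2
      simp [List.getElem?_eq_some_iff] at this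
      exact this.1
    have := nonnegPrefixes_iff_sum_take.mp ht i
    rw [List.cons_append, List.take_succ_cons, List.sum_cons,
      List.take_append_of_le_length (by simp; omega)] at hzero
    omega

theorem HillsFollowedByUUU.up_down {w : List ℤ} (hw : HillsFollowedByUUU w)
    (huuu : ∃ j, OccursAt pUUU w j) : HillsFollowedByUUU (1 :: -1 :: w) := by
  rintro (_ | _ | i) hocc hzero
  · obtain ⟨j, hj⟩ := huuu
    exact ⟨j + 2, by omega, hj⟩
  · simp [occursAt_pUD_iff] at hocc
  · obtain ⟨j, hij, hj⟩ := hw i hocc (by simpa using hzero)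
    exact ⟨j + 2, by omega, hj⟩

section PhiSpec

variable {φ : List ℤ → List ℤ}

theorem PhiSpec.exists_decomposition (hφ : PhiSpec φ) {P : List ℤ} (hP : IsDyckExcursionCat P)
    (hne : P ≠ []) :
    ∃ β, IsDyckExcursionCat β ∧ β.length < P.length ∧
      ((∃ α, IsDyckWord α ∧ α.length < P.length ∧ (∀ s ∈ P, s ≤ -2 → s ∈ β) ∧
          φ P = (1 :: (1 :: -1 :: φ α) ++ [-1]) ++ φ β) ∨
        (∃ α, IsDyckWord α ∧ α ≠ [] ∧ α.length < P.length ∧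
          φ P = (1 :: φ α ++ [-1]) ++ φ β) ∨
        (∃ γ, IsDyckExcursionCat γ ∧ (∃ s ∈ γ, s ≤ -2) ∧ γ.length < P.length ∧
          φ P = (1 :: -1 :: φ γ) ++ φ β)) := by
  obtain ⟨-, -, hD, hD2, hDi⟩ := hφ
  obtain ⟨α, c, β, rfl, hc, hsteps, hnn, hsum, hβ⟩ := hP.exists_firstReturn hne
  refine ⟨β, hβ, by simp; omega, ?_⟩
  obtain rfl | rfl | hc3 : c = -1 ∨ c = -2 ∨ c ≤ -3 := by omega
  · refine Or.inl ⟨α, ⟨hsteps, hnn, by omega⟩, by simp, fun s hs hs2 => ?_, ?_⟩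
    · simp only [List.mem_cons, List.mem_append] at hs
      rcases hs with rfl | hs | rfl | hs
      · omega
      · rcases hsteps s hs with rfl | rfl <;> omega
      · omega
      · exact hs
    · simpa using hD α β hsteps hnn (by omega) hβ.1
  · refine Or.inr (Or.inl ⟨α ++ [-1], ⟨?_, hnn.concat (by omega), by simp; omega⟩, by simp,
      by simp, by simpa using hD2 α β hsteps hnn (by omega) hβ.1⟩)
    simpa [or_imp, forall_and] using hsteps
  · refine Or.inr (Or.inr ⟨α ++ [c + 1],
      isDyckExcursionCat_append_singleton hsteps hnn (by omega) (by omega),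
      ⟨c + 1, by simp, by omega⟩, by simp, ?_⟩)
    have := hDi α β (-c).toNat (by omega) hsteps hnn (by omega) hβ.1
    rw [show (((-c).toNat : ℕ) : ℤ) = -c by omega, neg_neg, show -(-c - 1) = c + 1 by ring] at this
    simpa using this

theorem PhiSpec.isDyckWord_phi (hφ : PhiSpec φ) {P : List ℤ} (hP : IsDyckExcursionCat P) :
    IsDyckWord (φ P) := by
  rcases eq_or_ne P [] with rfl | hne
  · rw [hφ.1]
    exact isDyckWord_nil
  obtain ⟨β, hβ, hβlen, hcases⟩ := hφ.exists_decomposition hP hne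
  have hφβ := hφ.isDyckWord_phi hβ
  rcases hcases with ⟨α, hα, hαlen, -, heq⟩ | ⟨α, hα, -, hαlen, heq⟩ | ⟨γ, hγ, -, hγlen, heq⟩ <;>
    rw [heq]
  · exact (isDyckWord_up_down.append_s18 (hφ.isDyckWord_phi hα.isDyckExcursionCat)).elevate.append_s18 hφβ
  · exact (hφ.isDyckWord_phi hα.isDyckExcursionCat).elevate.append_s18 hφβ
  · exact (isDyckWord_up_down.append_s18 (hφ.isDyckWord_phi hγ)).append_s18 hφβ
termination_by P.length

theorem PhiSpec.exists_phi_eq_up_up (hφ : PhiSpec φ) {w : List ℤ} (hw : IsDyckWord w)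
    (hne : w ≠ []) : ∃ t, φ w = 1 :: 1 :: t := by
  obtain ⟨α, c, β, rfl, hc, hsteps, hnn, hsum, hβ⟩ := hw.isDyckExcursionCat.exists_firstReturn hne
  obtain rfl : c = -1 := by
    have := hw.1 c (by simp)
    omega
  exact ⟨_, hφ.2.2.1 α β hsteps hnn (by omega) hβ.1⟩

theorem PhiSpec.exists_occursAt_pUUU_phi (hφ : PhiSpec φ) {P : List ℤ}
    (hP : IsDyckExcursionCat P) (hcat : ∃ s ∈ P, s ≤ -2) : ∃ j, OccursAt pUUU (φ P) j := by
  have hne : P ≠ [] := by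
    rintro rfl
    simp at hcat
  obtain ⟨s, hs, hs2⟩ := hcat
  obtain ⟨β, hβ, hβlen, hcases⟩ := hφ.exists_decomposition hP hne
  rcases hcases with ⟨α, -, -, hsβ, heq⟩ | ⟨α, hα, hαne, -, heq⟩ | ⟨γ, hγ, hγcat, hγlen, heq⟩ <;>
    rw [heq]
  · obtain ⟨j, hj⟩ := hφ.exists_occursAt_pUUU_phi hβ ⟨s, hsβ s hs hs2, hs2⟩
    exact ⟨_, occursAt_append_length_add.mpr hj⟩
  · obtain ⟨t, ht⟩ := hφ.exists_phi_eq_up_up hα hαne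
    exact ⟨0, by simp [ht, OccursAt, pUUU]⟩
  · obtain ⟨j, hj⟩ := hφ.exists_occursAt_pUUU_phi hγ hγcat
    exact ⟨j + 2, hj.append_right _⟩
termination_by P.length

theorem PhiSpec.hillsFollowedByUUU_phi (hφ : PhiSpec φ) {P : List ℤ}
    (hP : IsDyckExcursionCat P) : HillsFollowedByUUU (φ P) := by
  rcases eq_or_ne P [] with rfl | hne
  · rw [hφ.1]
    exact hillsFollowedByUUU_nil
  obtain ⟨β, hβ, hβlen, hcases⟩ := hφ.exists_decomposition hP hne
  have hφβ := hφ.hillsFollowedByUUU_phi hβ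
  rcases hcases with ⟨α, hα, hαlen, -, heq⟩ | ⟨α, hα, hαne, hαlen, heq⟩ |
      ⟨γ, hγ, hγcat, hγlen, heq⟩ <;> rw [heq]
  · have hφα := isDyckWord_up_down.append_s18 (hφ.isDyckWord_phi hα.isDyckExcursionCat)
    exact (hillsFollowedByUUU_up_up hφα.2.1).append_s18 hφα.elevate.2.2 hφβ
  · have hφα := hφ.isDyckWord_phi hα.isDyckExcursionCat
    obtain ⟨t, ht⟩ := hφ.exists_phi_eq_up_up hα hαne
    rw [ht] at hφα ⊢
    exact (hillsFollowedByUUU_up_up (t := 1 :: t) hφα.2.1).append_s18 hφα.elevate.2.2 hφβ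
  · have hφγ := isDyckWord_up_down.append_s18 (hφ.isDyckWord_phi hγ)
    exact ((hφ.hillsFollowedByUUU_phi hγ).up_down (hφ.exists_occursAt_pUUU_phi hγ hγcat)).append_s18
      hφγ.2.2 hφβ
termination_by P.length

end PhiSpec

theorem stmt_18_general (φ : List ℤ → List ℤ) (hφ : PhiSpec φ) (P : List ℤ)
    (hP : IsDyckExcursionCat P) :
    ∀ i, OccursAt pUD (φ P) i → ((φ P).take i).sum = 0 →
      ∃ j, i < j ∧ OccursAt pUUU (φ P) j :=
  hφ.hillsFollowedByUUU_phi hP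

/-- For every Dyck excursion with catastrophes P of length n, every occurrence of the
factor UD starting at height 0 in φ(P) is followed, strictly later, by an occurrence
of UUU. -/
theorem stmt_18 (φ : List ℤ → List ℤ) (hφ : PhiSpec φ) (n : ℕ) (P : List ℤ)
    (hP : IsDyckExcursionCat P) (hn : P.length = n) :
    ∀ i, OccursAt pUD (φ P) i → ((φ P).take i).sum = 0 →
      ∃ j, i < j ∧ OccursAt pUUU (φ P) j :=
  stmt_18_general φ hφ P hP
end
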